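/- arXiv:1311.6193 — 5 statements merged into one kernel-verified Lean document; each statement's English description precedes it below -/
import Mathlib

section
/- For the sequence Iₖ = ∫₀^{π/2} cosᵏ(x) dx, there exists a constant C > 0 such that |√k · Iₖ − √(π/2)| ≤ C/k for all k ∈ ℕ. -/
/-!
Integration by parts gives `(k + 1) Iₖ₊₁ Iₖ = π / 2`, and `Iₖ` is decreasing in `k`. Together these
trap `k Iₖ²` between `π / 2 · k / (k + 1)` and `π / 2`, so `√k Iₖ` lies within `√(π / 2) / (k + 1)`
of `√(π / 2)`.
-/

open Real intervalIntegral

noncomputable def wallisIntegral (k : ℕ) : ℝ := ∫ x in (0 : ℝ)..π / 2, cos x ^ k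

lemma wallisIntegral_zero : wallisIntegral 0 = π / 2 := by simp [wallisIntegral]

lemma wallisIntegral_one : wallisIntegral 1 = 1 := by simp [wallisIntegral]

lemma wallisIntegral_add_two (n : ℕ) :
    wallisIntegral (n + 2) = (n + 1) / (n + 2) * wallisIntegral n := by
  simpa [wallisIntegral] using integral_cos_pow (a := 0) (b := π / 2) (n := n)

lemma wallisIntegral_pos (n : ℕ) : 0 < wallisIntegral n := EulerSine.integral_cos_pow_pos n

lemma wallisIntegral_succ_le (n : ℕ) : wallisIntegral (n + 1) ≤ wallisIntegral n := by
  simp only [wallisIntegral, EulerSine.integral_cos_pow_eq]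
  gcongr
  exact integral_sin_pow_succ_le n

lemma succ_mul_wallisIntegral_succ_mul_wallisIntegral (k : ℕ) :
    (k + 1) * wallisIntegral (k + 1) * wallisIntegral k = π / 2 := by
  induction k with
  | zero => simp [wallisIntegral_zero, wallisIntegral_one]
  | succ n ih =>
    rw [wallisIntegral_add_two]
    push_cast
    field_simp
    linear_combination 2 * ((n : ℝ) + 2) * ih

lemma succ_mul_wallisIntegral_succ_sq_le (k : ℕ) :
    (k + 1) * wallisIntegral (k + 1) ^ 2 ≤ π / 2 := by
  rw [← succ_mul_wallisIntegral_succ_mul_wallisIntegral k, sq, ← mul_assoc]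
  exact mul_le_mul_of_nonneg_left (wallisIntegral_succ_le k)
    (mul_pos (by positivity) (wallisIntegral_pos _)).le

lemma pi_div_two_le_succ_mul_wallisIntegral_sq (k : ℕ) :
    π / 2 ≤ (k + 1) * wallisIntegral k ^ 2 := by
  rw [← succ_mul_wallisIntegral_succ_mul_wallisIntegral k, sq, ← mul_assoc]
  exact mul_le_mul_of_nonneg_right
    (mul_le_mul_of_nonneg_left (wallisIntegral_succ_le k) (by positivity)) (wallisIntegral_pos k).le

lemma abs_sub_sqrt_le_of_mul_le_sq {y a t : ℝ} (hy : 0 ≤ y) (ht₀ : 0 ≤ t) (ht₁ : t ≤ 1)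
    (hlow : t * a ≤ y ^ 2) (hup : y ^ 2 ≤ a) : |y - √a| ≤ (1 - t) * √a := by
  have hy_le : y ≤ √a := Real.le_sqrt_of_sq_le hup
  have hle_y : t * √a ≤ y := calc
    t * √a ≤ √t * √a := by gcongr; exact Real.le_sqrt_self_iff.mpr ht₁
    _ = √(t * a) := (Real.sqrt_mul ht₀ a).symm
    _ ≤ y := (Real.sqrt_le_sqrt hlow).trans_eq (Real.sqrt_sq hy)
  rw [abs_of_nonpos (by linarith)]
  linarith

lemma abs_sqrt_mul_wallisIntegral_sub_le {k : ℕ} (hk : 0 < k) :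
    |√k * wallisIntegral k - √(π / 2)| ≤ √(π / 2) / (k + 1) := by
  have hk' : (0 : ℝ) < k := by exact_mod_cast hk
  have hsq : (√k * wallisIntegral k) ^ 2 = k * wallisIntegral k ^ 2 := by
    rw [mul_pow, Real.sq_sqrt hk'.le]
  have hup : (k : ℝ) * wallisIntegral k ^ 2 ≤ π / 2 := by
    obtain ⟨m, rfl⟩ : ∃ m, k = m + 1 := ⟨k - 1, by omega⟩
    exact_mod_cast succ_mul_wallisIntegral_succ_sq_le m
  have hlow : k / (k + 1) * (π / 2) ≤ (k : ℝ) * wallisIntegral k ^ 2 := by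
    rw [div_mul_eq_mul_div, div_le_iff₀ (by positivity), mul_assoc, mul_comm (wallisIntegral k ^ 2)]
    exact mul_le_mul_of_nonneg_left (pi_div_two_le_succ_mul_wallisIntegral_sq k) hk'.le
  have hbound := abs_sub_sqrt_le_of_mul_le_sq
    (mul_nonneg (Real.sqrt_nonneg _) (wallisIntegral_pos k).le) (by positivity)
    ((div_le_one (by positivity)).mpr (by linarith)) (hsq ▸ hlow) (hsq ▸ hup)
  convert hbound using 1
  field_simp
  ring

/-- For the Wallis integrals `Iₖ = ∫₀^{π/2} cosᵏ x dx`, there is a constant `C > 0` with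
`|√k · Iₖ − √(π/2)| ≤ C / k` for all `k ≥ 1`. -/
theorem wallis_sqrt_estimate :
    ∃ C > (0 : ℝ), ∀ k : ℕ, 1 ≤ k →
      |Real.sqrt k * (∫ x in (0 : ℝ)..(Real.pi / 2), Real.cos x ^ k) -
          Real.sqrt (Real.pi / 2)| ≤ C / k := by
  refine ⟨√(π / 2), by positivity, fun k hk => ?_⟩
  have hk' : (0 : ℝ) < k := by exact_mod_cast hk
  calc _ ≤ √(π / 2) / (k + 1) := abs_sqrt_mul_wallisIntegral_sub_le hk
    _ ≤ √(π / 2) / k := by gcongr; linarith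
end

section
/- Let X₁, …, Xₙ be centered normal random variables with variances σₖ², possibly correlated. Then E[max(|X₁|, …, |Xₙ|)] ≤ 2·(max_{1≤k≤n} σₖ)·√(ln(n+1)). -/
open MeasureTheory ProbabilityTheory Real
open scoped NNReal ENNReal

/-! Each `Xₖ` is sub-Gaussian with parameter `σ² = maxₖ σₖ²`, and
`exp (t |y|) ≤ exp (t y) + exp (-t y)`, so Jensen's inequality and a union bound over the `2n`
exponentials give `exp (t 𝔼[maxₖ |Xₖ|]) ≤ 2n exp (σ² t² / 2)` for every `t`. Optimizing in `t`
yields `𝔼[maxₖ |Xₖ|] ≤ σ √(2 log (2n))`, and `2n ≤ (n + 1)²`. -/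

lemma exp_mul_abs_le (t y : ℝ) : exp (t * |y|) ≤ exp (t * y) + exp (-t * y) := by
  rcases abs_cases y with ⟨hy, -⟩ | ⟨hy, -⟩ <;> rw [hy]
  · exact le_add_of_nonneg_right (exp_nonneg _)
  · rw [mul_neg, ← neg_mul]
    exact le_add_of_nonneg_left (exp_nonneg _)

lemma exp_mul_iSup_abs_le_sum {ι : Type*} [Fintype ι] [Nonempty ι] (t : ℝ) (x : ι → ℝ) :
    exp (t * ⨆ i, |x i|) ≤ ∑ i, (exp (t * x i) + exp (-t * x i)) := by
  obtain ⟨j, hj⟩ := exists_eq_ciSup_of_finite (f := fun i => |x i|)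
  rw [← hj]
  exact (exp_mul_abs_le t (x j)).trans <|
    Finset.single_le_sum (f := fun i => exp (t * x i) + exp (-t * x i))
      (fun i _ => by positivity) (Finset.mem_univ j)

lemma le_sqrt_of_forall_mul_le_add_sq {a c L : ℝ} (hL : 0 < L)
    (h : ∀ t, t * a ≤ L + c * t ^ 2 / 2) : a ≤ √(2 * c * L) := by
  by_contra! hlt
  have ha : 0 < a := (sqrt_nonneg _).trans_lt hlt
  have hat : L * a ^ 2 ≤ 2 * c * L ^ 2 := by
    have := h (2 * L / a)
    field_simp at this
    nlinarith
  have hsq : a ^ 2 ≤ 2 * c * L := le_of_mul_le_mul_left (by nlinarith) hL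
  exact hlt.not_ge ((le_sqrt ha.le (by nlinarith)).mpr hsq)

namespace ProbabilityTheory

variable {Ω : Type*} {mΩ : MeasurableSpace Ω} {μ : Measure Ω}

lemma exp_mul_integral_le_mgf [IsProbabilityMeasure μ] {X : Ω → ℝ} {t : ℝ}
    (hX : Integrable X μ) (hexp : Integrable (fun ω => exp (t * X ω)) μ) :
    exp (t * μ[X]) ≤ mgf X μ t := by
  rw [← integral_const_mul]
  exact convexOn_exp.map_integral_le continuous_exp.continuousOn isClosed_univ
    (ae_of_all _ fun _ => Set.mem_univ _) (hX.const_mul t) hexp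

lemma HasSubgaussianMGF.mono {X : Ω → ℝ} {c d : ℝ≥0} (h : HasSubgaussianMGF X c μ)
    (hcd : c ≤ d) : HasSubgaussianMGF X d μ where
  integrable_exp_mul := h.integrable_exp_mul
  mgf_le t := (h.mgf_le t).trans <| exp_le_exp.mpr <| by gcongr

lemma hasSubgaussianMGF_of_map_eq_gaussianReal {X : Ω → ℝ} {v : ℝ≥0}
    (hX : μ.map X = gaussianReal 0 v) : HasSubgaussianMGF X v μ := by
  have hXm : AEMeasurable X μ := aemeasurable_of_map_neZero (by rw [hX]; infer_instance)
  rw [← HasSubgaussianMGF.id_map_iff hXm, hX]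
  exact ⟨integrable_exp_mul_gaussianReal, fun t => by simp [mgf_id_gaussianReal]⟩

section MaxAbs

variable {ι : Type*} [Fintype ι] [Nonempty ι] {X : ι → Ω → ℝ} {c : ℝ≥0}

lemma integrable_iSup_abs (hX : ∀ i, Integrable (X i) μ) :
    Integrable (fun ω => ⨆ i, |X i ω|) μ := by
  refine (integrable_finsetSum Finset.univ fun i _ => (hX i).abs).mono'
    (AEMeasurable.iSup fun i => (hX i).aemeasurable.abs).aestronglyMeasurable
    (ae_of_all _ fun ω => ?_)
  rw [norm_of_nonneg (Real.iSup_nonneg fun i => abs_nonneg _)]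
  exact ciSup_le fun i =>
    Finset.single_le_sum (f := fun i => |X i ω|) (fun i _ => abs_nonneg _) (Finset.mem_univ i)

lemma integrable_exp_mul_iSup_abs (hX : ∀ i, HasSubgaussianMGF (X i) c μ) (t : ℝ) :
    Integrable (fun ω => exp (t * ⨆ i, |X i ω|)) μ := by
  refine (integrable_finsetSum Finset.univ fun i _ =>
    ((hX i).integrable_exp_mul t).add ((hX i).integrable_exp_mul (-t))).mono'
    ?_ (ae_of_all _ fun ω => ?_)
  · exact (continuous_exp.measurable.comp_aemeasurable
      ((AEMeasurable.iSup fun i => (hX i).aemeasurable.abs).const_mul t)).aestronglyMeasurable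
  · rw [norm_of_nonneg (exp_nonneg _)]
    exact exp_mul_iSup_abs_le_sum t (X · ω)

lemma mgf_iSup_abs_le (hX : ∀ i, HasSubgaussianMGF (X i) c μ) (t : ℝ) :
    mgf (fun ω => ⨆ i, |X i ω|) μ t ≤ 2 * Fintype.card ι * exp (c * t ^ 2 / 2) := by
  have hint i : Integrable (fun ω => exp (t * X i ω) + exp (-t * X i ω)) μ :=
    ((hX i).integrable_exp_mul t).add ((hX i).integrable_exp_mul (-t))
  calc mgf (fun ω => ⨆ i, |X i ω|) μ t
      ≤ ∫ ω, ∑ i, (exp (t * X i ω) + exp (-t * X i ω)) ∂μ :=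
        integral_mono (integrable_exp_mul_iSup_abs hX t) (integrable_finsetSum _ fun i _ => hint i)
          fun ω => exp_mul_iSup_abs_le_sum t (X · ω)
    _ = ∑ i, (mgf (X i) μ t + mgf (X i) μ (-t)) := by
        rw [integral_finsetSum _ fun i _ => hint i]
        exact Finset.sum_congr rfl fun i _ =>
          integral_add ((hX i).integrable_exp_mul t) ((hX i).integrable_exp_mul (-t))
    _ ≤ ∑ _i : ι, 2 * exp (c * t ^ 2 / 2) := by
        refine Finset.sum_le_sum fun i _ => ?_
        have h := (hX i).mgf_le (-t)
        rw [neg_sq] at h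
        linarith [(hX i).mgf_le t]
    _ = 2 * Fintype.card ι * exp (c * t ^ 2 / 2) := by
        rw [Finset.sum_const, Finset.card_univ, nsmul_eq_mul]
        ring

variable [IsProbabilityMeasure μ]

lemma mul_integral_iSup_abs_le (hX : ∀ i, HasSubgaussianMGF (X i) c μ) (t : ℝ) :
    t * μ[fun ω => ⨆ i, |X i ω|] ≤ log (2 * Fintype.card ι) + c * t ^ 2 / 2 := by
  have hexp : exp (t * μ[fun ω => ⨆ i, |X i ω|]) ≤ 2 * Fintype.card ι * exp (c * t ^ 2 / 2) :=
    (exp_mul_integral_le_mgf (integrable_iSup_abs fun i => (hX i).integrable)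
      (integrable_exp_mul_iSup_abs hX t)).trans (mgf_iSup_abs_le hX t)
  rwa [← le_log_iff_exp_le (by positivity), log_mul (by positivity) (exp_ne_zero _),
    log_exp] at hexp

lemma integral_iSup_abs_le_sqrt (hX : ∀ i, HasSubgaussianMGF (X i) c μ) :
    μ[fun ω => ⨆ i, |X i ω|] ≤ √(2 * c * log (2 * Fintype.card ι)) :=
  le_sqrt_of_forall_mul_le_add_sq
    (log_pos (by have := Fintype.card_pos (α := ι); norm_cast; omega))
    (mul_integral_iSup_abs_le hX)

end MaxAbs

end ProbabilityTheory

theorem expectation_max_abs_gaussian_le_general {Ω : Type*} [MeasureSpace Ω]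
    [IsProbabilityMeasure (ℙ : Measure Ω)] (n : ℕ) (hn : 0 < n)
    (X : Fin n → Ω → ℝ) (v : Fin n → ℝ≥0)
    (hmarg : ∀ k, Measure.map (X k) ℙ = gaussianReal 0 (v k)) :
    ∫ ω, (⨆ k : Fin n, |X k ω|) ∂ℙ ≤
      2 * (⨆ k : Fin n, Real.sqrt (v k)) * Real.sqrt (Real.log (n + 1)) := by
  have : Nonempty (Fin n) := ⟨⟨0, hn⟩⟩
  set σ := ⨆ k : Fin n, √(v k : ℝ)
  have hσ : 0 ≤ σ := Real.iSup_nonneg fun k => sqrt_nonneg _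
  have hsub k : HasSubgaussianMGF (X k) ⟨σ ^ 2, sq_nonneg σ⟩ ℙ :=
    (hasSubgaussianMGF_of_map_eq_gaussianReal (hmarg k)).mono <| NNReal.coe_le_coe.mp <|
      (sqrt_le_left hσ).mp (le_ciSup (f := fun k => √(v k : ℝ)) (Set.finite_range _).bddAbove k)
  have hlog : log (2 * n) ≤ 2 * log (n + 1) :=
    calc log (2 * n) ≤ log ((n + 1) ^ 2) := log_le_log (by positivity) (by nlinarith)
      _ = 2 * log (n + 1) := by rw [log_pow]; push_cast; rfl
  calc ∫ ω, (⨆ k, |X k ω|) ∂ℙ ≤ √(2 * σ ^ 2 * log (2 * n)) := by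
        have h := integral_iSup_abs_le_sqrt hsub
        rwa [Fintype.card_fin] at h
    _ ≤ √((2 * σ) ^ 2 * log (n + 1)) := sqrt_le_sqrt (by nlinarith)
    _ = 2 * σ * √(log (n + 1)) := by
        rw [sqrt_mul' _ (log_nonneg (by linarith)), sqrt_sq (by positivity)]

/-- Maximal inequality for (possibly correlated) jointly Gaussian centered normal random
variables `Xₖ ~ N(0, vₖ)`: `E[max |Xₖ|] ≤ 2 (maxₖ σₖ) √(ln (n+1))` where `σₖ = √vₖ`. -/
theorem expectation_max_abs_gaussian_le {Ω : Type*} [MeasureSpace Ω]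
    [IsProbabilityMeasure (ℙ : Measure Ω)] (n : ℕ) (hn : 0 < n)
    (X : Fin n → Ω → ℝ) (v : Fin n → ℝ≥0)
    (hjoint : ∀ a : Fin n → ℝ, ∃ V : ℝ≥0,
      Measure.map (fun ω => ∑ k, a k * X k ω) ℙ = gaussianReal 0 V)
    (hmarg : ∀ k, Measure.map (X k) ℙ = gaussianReal 0 (v k)) :
    ∫ ω, (⨆ k : Fin n, |X k ω|) ∂ℙ ≤
      2 * (⨆ k : Fin n, Real.sqrt (v k)) * Real.sqrt (Real.log (n + 1)) :=
  expectation_max_abs_gaussian_le_general n hn X v hmarg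
end

section
/- Let T = A ∪ B ∪ C ∪ D be an index set and X = (X(t) : t ∈ T) a stochastic process. Suppose (1) X restricted to A and X restricted to C are conditionally independent given X restricted to B, and (2) there exists C′ ⊆ C such that X restricted to A ∪ B ∪ C and X restricted to D are conditionally independent given X restricted to C′. Then X restricted to A and X restricted to C ∪ D are conditionally independent given X restricted to B. -/
/-!
Conditional independence `m₁ ⫫ m₂ | m'` holds iff `P(t | m₁ ⊔ m') = P(t | m')` for every
`t ∈ m₂`. In this form the graphoid axioms of weak union and contraction are immediate. By weak
union, (2) gives `X_A ⫫ X_D | X_{B ∪ C}`, because `C' ⊆ C` and `B ∪ C ⊆ A ∪ B ∪ C`; contraction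
of this with (1) gives `X_A ⫫ X_{C ∪ D} | X_B`.
-/

open MeasureTheory ProbabilityTheory

/-- The σ-algebra generated by the random variables `(X t : t ∈ S)`. -/
def procSigma {T Ω : Type*} [MeasurableSpace Ω] (X : T → Ω → ℝ) (S : Set T) :
    MeasurableSpace Ω :=
  ⨆ t ∈ S, MeasurableSpace.comap (X t) inferInstance

theorem procSigma_le {T Ω : Type*} [m : MeasurableSpace Ω] {X : T → Ω → ℝ}
    (hX : ∀ t, Measurable (X t)) (S : Set T) : procSigma X S ≤ m :=
  iSup₂_le fun t _ => (hX t).comap_le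

namespace MeasureTheory

open MeasurableSpace

variable {Ω E : Type*} {mΩ : MeasurableSpace Ω} {μ : Measure Ω}
  [NormedAddCommGroup E] [NormedSpace ℝ E]

theorem isPiSystem_image2_inter (m₁ m₂ : MeasurableSpace Ω) :
    IsPiSystem (Set.image2 (· ∩ ·) {s | MeasurableSet[m₁] s} {s | MeasurableSet[m₂] s}) := by
  rintro _ ⟨s₁, hs₁, s₂, hs₂, rfl⟩ _ ⟨t₁, ht₁, t₂, ht₂, rfl⟩ -
  exact ⟨s₁ ∩ t₁, hs₁.inter ht₁, s₂ ∩ t₂, hs₂.inter ht₂, Set.inter_inter_inter_comm _ _ _ _⟩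

theorem sup_eq_generateFrom_image2_inter (m₁ m₂ : MeasurableSpace Ω) :
    m₁ ⊔ m₂ = generateFrom (Set.image2 (· ∩ ·) {s | MeasurableSet[m₁] s}
      {s | MeasurableSet[m₂] s}) := by
  refine le_antisymm (sup_le (fun s hs => ?_) (fun s hs => ?_)) (generateFrom_le ?_)
  · exact measurableSet_generateFrom ⟨s, hs, Set.univ, MeasurableSet.univ, Set.inter_univ s⟩
  · exact measurableSet_generateFrom ⟨Set.univ, MeasurableSet.univ, s, hs, Set.univ_inter s⟩
  · rintro _ ⟨s₁, hs₁, s₂, hs₂, rfl⟩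
    exact (le_sup_left (b := m₂) s₁ hs₁).inter (le_sup_right (a := m₁) s₂ hs₂)

theorem setIntegral_eq_of_forall_inter {m₁ m₂ : MeasurableSpace Ω} (hm₁ : m₁ ≤ mΩ)
    (hm₂ : m₂ ≤ mΩ) {f g : Ω → E} (hf : Integrable f μ) (hg : Integrable g μ)
    (h : ∀ s₁ s₂, MeasurableSet[m₁] s₁ → MeasurableSet[m₂] s₂ →
      ∫ x in s₁ ∩ s₂, f x ∂μ = ∫ x in s₁ ∩ s₂, g x ∂μ)
    {s : Set Ω} (hs : MeasurableSet[m₁ ⊔ m₂] s) : ∫ x in s, f x ∂μ = ∫ x in s, g x ∂μ := by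
  have hsup : m₁ ⊔ m₂ ≤ mΩ := sup_le hm₁ hm₂
  induction s, hs using induction_on_inter (sup_eq_generateFrom_image2_inter m₁ m₂)
    (isPiSystem_image2_inter m₁ m₂) with
  | empty => simp
  | basic _ hu =>
    obtain ⟨s₁, hs₁, s₂, hs₂, rfl⟩ := hu
    exact h s₁ s₂ hs₁ hs₂
  | compl u hu ihu =>
    have huniv : ∫ x, f x ∂μ = ∫ x, g x ∂μ := by
      simpa using h Set.univ Set.univ MeasurableSet.univ MeasurableSet.univ
    rw [← integral_add_compl (hsup u hu) hf, ← integral_add_compl (hsup u hu) hg, ihu] at huniv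
    exact add_left_cancel huniv
  | iUnion u hdisj hu ihu =>
    rw [integral_iUnion (fun i => hsup _ (hu i)) hdisj hf.integrableOn,
      integral_iUnion (fun i => hsup _ (hu i)) hdisj hg.integrableOn]
    exact tsum_congr ihu

end MeasureTheory

namespace ProbabilityTheory

variable {Ω : Type*} {m m' m'' m₁ m₂ m₃ mΩ : MeasurableSpace Ω} {μ : Measure Ω}
  [IsFiniteMeasure μ]

theorem condExp_indicator_of_stronglyMeasurable {g : Ω → ℝ} (hg : StronglyMeasurable[m] g)
    (hgi : Integrable g μ) {s : Set Ω} (hs : MeasurableSet s) :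
    μ[s.indicator g | m] =ᵐ[μ] g * μ⟦s | m⟧ := by
  have hmul : s.indicator g = g * s.indicator (fun _ => (1 : ℝ)) := by
    ext x
    by_cases hx : x ∈ s <;> simp [hx]
  rw [hmul]
  exact condExp_mul_of_stronglyMeasurable_left hg (hmul ▸ hgi.indicator hs)
    ((integrable_const 1).indicator hs)

theorem condExp_ae_eq_of_le_of_le {f : Ω → ℝ} (hm₁ : m₁ ≤ m) (hm₂ : m ≤ m₂)
    (hm₂Ω : m₂ ≤ mΩ) (h : μ[f | m₂] =ᵐ[μ] μ[f | m₁]) : μ[f | m] =ᵐ[μ] μ[f | m₁] :=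
  calc μ[f | m] =ᵐ[μ] μ[μ[f | m₂] | m] := (condExp_condExp_of_le hm₂ hm₂Ω).symm
    _ =ᵐ[μ] μ[μ[f | m₁] | m] := condExp_congr_ae h
    _ = μ[f | m₁] :=
      condExp_of_stronglyMeasurable (hm₂.trans hm₂Ω)
        (stronglyMeasurable_condExp.mono hm₁) integrable_condExp

variable [StandardBorelSpace Ω]

theorem CondIndep.condExp_indicator_sup_ae_eq {hm' : m' ≤ mΩ} (hm₁ : m₁ ≤ mΩ) (hm₂ : m₂ ≤ mΩ)
    (h : CondIndep m' m₁ m₂ hm' μ) {t : Set Ω} (ht : MeasurableSet[m₂] t) :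
    μ⟦t | m₁ ⊔ m'⟧ =ᵐ[μ] μ⟦t | m'⟧ := by
  have htΩ : MeasurableSet t := hm₂ t ht
  have hind : ∀ {s}, MeasurableSet s → Integrable (s.indicator fun _ => (1 : ℝ)) μ :=
    fun hs => (integrable_const 1).indicator hs
  refine (ae_eq_condExp_of_forall_setIntegral_eq (sup_le hm₁ hm') (hind htΩ)
    (fun _ _ _ => integrable_condExp.integrableOn)
    (fun s hs _ => setIntegral_eq_of_forall_inter hm₁ hm' integrable_condExp (hind htΩ) ?_ hs)
    (stronglyMeasurable_condExp.mono (le_sup_right : m' ≤ m₁ ⊔ m')).aestronglyMeasurable).symm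
  intro s₁ s₂ hs₁ hs₂
  have hs₁Ω : MeasurableSet s₁ := hm₁ s₁ hs₁
  have hprod : μ[s₁.indicator (μ⟦t | m'⟧) | m'] =ᵐ[μ] μ⟦s₁ ∩ t | m'⟧ :=
    (condExp_indicator_of_stronglyMeasurable stronglyMeasurable_condExp integrable_condExp
      hs₁Ω).trans <| (mul_comm (μ⟦t | m'⟧) _ ▸ ((condIndep_iff m' m₁ m₂ hm' hm₁ hm₂ μ).1 h
        s₁ t hs₁ ht).symm)
  calc ∫ x in s₁ ∩ s₂, (μ⟦t | m'⟧) x ∂μ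
      = ∫ x in s₂, s₁.indicator (μ⟦t | m'⟧) x ∂μ := by
        rw [Set.inter_comm, setIntegral_indicator hs₁Ω]
    _ = ∫ x in s₂, (μ⟦s₁ ∩ t | m'⟧) x ∂μ := by
        rw [← setIntegral_condExp hm' (integrable_condExp.indicator hs₁Ω) hs₂]
        exact setIntegral_congr_ae (hm' s₂ hs₂) (hprod.mono fun x hx _ => hx)
    _ = ∫ x in s₁ ∩ s₂, t.indicator (fun _ => (1 : ℝ)) x ∂μ := by
        rw [setIntegral_condExp hm' (hind (hs₁Ω.inter htΩ)) hs₂,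
          setIntegral_indicator (hs₁Ω.inter htΩ), setIntegral_indicator htΩ,
          Set.inter_left_comm, Set.inter_assoc]

theorem condIndep_of_forall_condExp_indicator_sup_ae_eq {hm' : m' ≤ mΩ} (hm₁ : m₁ ≤ mΩ)
    (hm₂ : m₂ ≤ mΩ) (h : ∀ t, MeasurableSet[m₂] t → μ⟦t | m₁ ⊔ m'⟧ =ᵐ[μ] μ⟦t | m'⟧) :
    CondIndep m' m₁ m₂ hm' μ := by
  refine (condIndep_iff m' m₁ m₂ hm' hm₁ hm₂ μ).2 fun s t hs ht => ?_
  have hsΩ : MeasurableSet s := hm₁ s hs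
  have ht_int : Integrable (t.indicator fun _ => (1 : ℝ)) μ :=
    (integrable_const 1).indicator (hm₂ t ht)
  calc μ⟦s ∩ t | m'⟧
      =ᵐ[μ] μ[μ[s.indicator (t.indicator fun _ => (1 : ℝ)) | m₁ ⊔ m'] | m'] := by
        rw [Set.indicator_indicator]
        exact (condExp_condExp_of_le le_sup_right (sup_le hm₁ hm')).symm
    _ =ᵐ[μ] μ[s.indicator (μ⟦t | m'⟧) | m'] :=
        condExp_congr_ae <| (condExp_indicator ht_int (le_sup_left (b := m') s hs)).trans
          ((h t ht).indicator)
    _ =ᵐ[μ] μ⟦t | m'⟧ * μ⟦s | m'⟧ :=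
        condExp_indicator_of_stronglyMeasurable stronglyMeasurable_condExp integrable_condExp hsΩ
    _ = μ⟦s | m'⟧ * μ⟦t | m'⟧ := mul_comm _ _

theorem CondIndep.weak_union {hm' : m' ≤ mΩ} (hm₁ : m₁ ≤ mΩ) (hm₂ : m₂ ≤ mΩ)
    (h : CondIndep m' m₁ m₂ hm' μ) (h_le : m' ≤ m'') (h_le' : m'' ≤ m₁ ⊔ m') :
    CondIndep m'' m₁ m₂ (h_le'.trans (sup_le hm₁ hm')) μ := by
  have hsup : m₁ ⊔ m' ≤ mΩ := sup_le hm₁ hm'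
  refine condIndep_of_forall_condExp_indicator_sup_ae_eq hm₁ hm₂ fun t ht => ?_
  have key := h.condExp_indicator_sup_ae_eq hm₁ hm₂ ht
  exact (condExp_ae_eq_of_le_of_le (h_le.trans le_sup_right) (sup_le le_sup_left h_le') hsup
    key).trans (condExp_ae_eq_of_le_of_le h_le h_le' hsup key).symm

theorem CondIndep.contraction {hm' : m' ≤ mΩ} (hm₁ : m₁ ≤ mΩ) (hm₂ : m₂ ≤ mΩ) (hm₃ : m₃ ≤ mΩ)
    (h : CondIndep m' m₁ m₂ hm' μ) (h' : CondIndep (m₂ ⊔ m') m₁ m₃ (sup_le hm₂ hm') μ) :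
    CondIndep m' m₁ (m₂ ⊔ m₃) hm' μ := by
  refine (condIndep_of_forall_condExp_indicator_sup_ae_eq (sup_le hm₂ hm₃) hm₁
    fun a ha => ?_).symm
  rw [sup_assoc, sup_left_comm]
  exact (h'.symm.condExp_indicator_sup_ae_eq hm₃ hm₁ ha).trans
    (h.symm.condExp_indicator_sup_ae_eq hm₂ hm₁ ha)

end ProbabilityTheory

theorem procSigma_mono {T Ω : Type*} [MeasurableSpace Ω] (X : T → Ω → ℝ) {S S' : Set T}
    (h : S ⊆ S') : procSigma X S ≤ procSigma X S' :=
  biSup_mono h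

theorem procSigma_union {T Ω : Type*} [MeasurableSpace Ω] (X : T → Ω → ℝ) (S S' : Set T) :
    procSigma X (S ∪ S') = procSigma X S ⊔ procSigma X S' :=
  iSup_union

theorem condIndep_union_of_condIndep_general {T Ω : Type*} [m : MeasurableSpace Ω]
    [StandardBorelSpace Ω] (μ : Measure Ω) [IsProbabilityMeasure μ]
    (X : T → Ω → ℝ) (hX : ∀ t, Measurable (X t))
    (A B C D : Set T)
    (h1 : CondIndep (procSigma X B) (procSigma X A) (procSigma X C)
      (procSigma_le hX B) μ)
    (h2 : ∃ C' : Set T, C' ⊆ C ∧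
      CondIndep (procSigma X C') (procSigma X (A ∪ B ∪ C)) (procSigma X D)
        (procSigma_le hX C') μ) :
    CondIndep (procSigma X B) (procSigma X A) (procSigma X (C ∪ D))
      (procSigma_le hX B) μ := by
  obtain ⟨C', hC'C, h2⟩ := h2
  have hCB : procSigma X C ⊔ procSigma X B ≤ procSigma X (A ∪ B ∪ C) ⊔ procSigma X C' :=
    le_sup_of_le_left (sup_le (procSigma_mono X Set.subset_union_right)
      (procSigma_mono X (Set.subset_union_right.trans Set.subset_union_left)))
  have hAD : CondIndep (procSigma X C ⊔ procSigma X B) (procSigma X A) (procSigma X D)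
      (sup_le (procSigma_le hX C) (procSigma_le hX B)) μ :=
    condIndep_of_condIndep_of_le_left
      (h2.weak_union (procSigma_le hX _) (procSigma_le hX D)
        (le_sup_of_le_left (procSigma_mono X hC'C)) hCB)
      (procSigma_mono X (Set.subset_union_left.trans Set.subset_union_left))
  rw [procSigma_union]
  exact h1.contraction (procSigma_le hX A) (procSigma_le hX C) (procSigma_le hX D) hAD

/-- Let `T = A ∪ B ∪ C ∪ D` and `X = (X t : t ∈ T)` be a stochastic process. If
(1) `X_A` and `X_C` are conditionally independent given `X_B`, and
(2) there is `C' ⊆ C` such that `X_{A ∪ B ∪ C}` and `X_D` are conditionally independent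
given `X_{C'}`, then `X_A` and `X_{C ∪ D}` are conditionally independent given `X_B`. -/
theorem condIndep_union_of_condIndep {T Ω : Type*} [m : MeasurableSpace Ω]
    [StandardBorelSpace Ω] (μ : Measure Ω) [IsProbabilityMeasure μ]
    (X : T → Ω → ℝ) (hX : ∀ t, Measurable (X t))
    (A B C D : Set T) (hT : A ∪ B ∪ C ∪ D = Set.univ)
    (h1 : CondIndep (procSigma X B) (procSigma X A) (procSigma X C)
      (procSigma_le hX B) μ)
    (h2 : ∃ C' : Set T, C' ⊆ C ∧
      CondIndep (procSigma X C') (procSigma X (A ∪ B ∪ C)) (procSigma X D)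
        (procSigma_le hX C') μ) :
    CondIndep (procSigma X B) (procSigma X A) (procSigma X (C ∪ D))
      (procSigma_le hX B) μ :=
  condIndep_union_of_condIndep_general (m := m) μ X hX A B C D h1 h2
end

section
/- Let F₁, F₂, G be sub-σ-algebras of F on a probability space, with F₁ and F₂ conditionally independent given G. If F ⊇ G is any σ-algebra with G ⊆ F ⊆ σ(F₂ ∪ G), then F₁ and F₂ are conditionally independent given F. -/
/-!
Conditional independence of `F₁` and `F₂` given `G` is equivalent to the Markov property
`μ⟦s | F₂ ⊔ G⟧ = μ⟦s | G⟧` for `s ∈ F₁` (test the Markov property on the π-system of sets `t ∩ e`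
with `t ∈ F₂`, `e ∈ G`). If `G ≤ F ≤ F₂ ⊔ G`, then `F₂ ⊔ F = F₂ ⊔ G`, and the tower property gives
`μ⟦s | F⟧ = μ[μ⟦s | F₂ ⊔ G⟧ | F] = μ[μ⟦s | G⟧ | F] = μ⟦s | G⟧`, so the Markov property holds
given `F` as well.
-/

open MeasureTheory ProbabilityTheory Set

theorem IsPiSystem.image2_inter {α : Type*} {C D : Set (Set α)} (hC : IsPiSystem C)
    (hD : IsPiSystem D) : IsPiSystem (image2 (· ∩ ·) C D) := by
  rintro _ ⟨s₁, hs₁, t₁, ht₁, rfl⟩ _ ⟨s₂, hs₂, t₂, ht₂, rfl⟩ hst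
  rw [inter_inter_inter_comm] at hst ⊢
  exact mem_image2_of_mem (hC _ hs₁ _ hs₂ hst.left) (hD _ ht₁ _ ht₂ hst.right)

theorem MeasurableSpace.sup_eq_generateFrom_image2_inter {α : Type*} (m₁ m₂ : MeasurableSpace α) :
    m₁ ⊔ m₂ = generateFrom
      (image2 (· ∩ ·) {s | MeasurableSet[m₁] s} {t | MeasurableSet[m₂] t}) := by
  refine le_antisymm (sup_le (fun s hs => ?_) (fun t ht => ?_)) (generateFrom_le ?_)
  · exact measurableSet_generateFrom ⟨s, hs, univ, MeasurableSet.univ, inter_univ s⟩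
  · exact measurableSet_generateFrom ⟨univ, MeasurableSet.univ, t, ht, univ_inter t⟩
  · rintro _ ⟨s, hs, t, ht, rfl⟩
    exact (le_sup_left (a := m₁) _ hs).inter (le_sup_right (a := m₁) _ ht)

section

variable {α E : Type*} [NormedAddCommGroup E] [NormedSpace ℝ E] {m m₀ : MeasurableSpace α}
  {μ : Measure α} {f g : α → E} {C : Set (Set α)}

theorem setIntegral_eq_of_isPiSystem (hm : m ≤ m₀) (h_eq : m = MeasurableSpace.generateFrom C)
    (hC : IsPiSystem C) (hf : Integrable f μ) (hg : Integrable g μ)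
    (basic : ∀ t ∈ C, ∫ x in t, f x ∂μ = ∫ x in t, g x ∂μ)
    (h_univ : ∫ x, f x ∂μ = ∫ x, g x ∂μ) {t : Set α} (ht : MeasurableSet[m] t) :
    ∫ x in t, f x ∂μ = ∫ x in t, g x ∂μ := by
  induction t, ht using MeasurableSpace.induction_on_inter h_eq hC with
  | empty => simp
  | basic t ht => exact basic t ht
  | compl t ht ih =>
    rw [← add_right_inj (∫ x in t, f x ∂μ), integral_add_compl (hm t ht) hf, ih,
      integral_add_compl (hm t ht) hg, h_univ]
  | iUnion s hdisj hs ih =>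
    rw [integral_iUnion (fun i => hm _ (hs i)) hdisj hf.integrableOn,
      integral_iUnion (fun i => hm _ (hs i)) hdisj hg.integrableOn]
    exact tsum_congr ih

theorem ae_eq_condExp_of_setIntegral_eq_of_isPiSystem [CompleteSpace E] [IsFiniteMeasure μ]
    (hm : m ≤ m₀) (h_eq : m = MeasurableSpace.generateFrom C) (hC : IsPiSystem C)
    (hf : Integrable f μ) (hg : Integrable g μ) (hg_meas : AEStronglyMeasurable[m] g μ)
    (basic : ∀ t ∈ C, ∫ x in t, g x ∂μ = ∫ x in t, f x ∂μ)
    (h_univ : ∫ x, g x ∂μ = ∫ x, f x ∂μ) :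
    g =ᵐ[μ] μ[f | m] :=
  ae_eq_condExp_of_forall_setIntegral_eq hm hf (fun _ _ _ => hg.integrableOn)
    (fun _ ht _ => setIntegral_eq_of_isPiSystem hm h_eq hC hg hf basic h_univ ht) hg_meas

end

theorem condExp_ae_eq_condExp_of_le_of_le {α E : Type*} [NormedAddCommGroup E] [NormedSpace ℝ E]
    [CompleteSpace E] {m₁ m₂ m₃ m₀ : MeasurableSpace α} {μ : Measure α} {f : α → E}
    (h₁₂ : m₁ ≤ m₂) (h₂₃ : m₂ ≤ m₃) (h₃ : m₃ ≤ m₀) [SigmaFinite (μ.trim h₃)]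
    [SigmaFinite (μ.trim (h₂₃.trans h₃))] (h : μ[f | m₃] =ᵐ[μ] μ[f | m₁]) :
    μ[f | m₂] =ᵐ[μ] μ[f | m₁] :=
  calc μ[f | m₂]
    _ =ᵐ[μ] μ[μ[f | m₃] | m₂] := (condExp_condExp_of_le h₂₃ h₃).symm
    _ =ᵐ[μ] μ[μ[f | m₁] | m₂] := condExp_congr_ae h
    _ = μ[f | m₁] := condExp_of_stronglyMeasurable (h₂₃.trans h₃)
      (stronglyMeasurable_condExp.mono h₁₂) integrable_condExp

theorem condExp_indicator_ae_eq_mul_condExp_indicator {Ω : Type*} {m m₀ : MeasurableSpace Ω}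
    {μ : Measure Ω} [IsFiniteMeasure μ] {h : Ω → ℝ} {t : Set Ω} (hh : StronglyMeasurable[m] h)
    (hint : Integrable h μ) (ht : MeasurableSet t) :
    μ[t.indicator h | m] =ᵐ[μ] h * μ⟦t | m⟧ := by
  have h_eq : t.indicator h = h * t.indicator fun _ => 1 := by
    ext x
    by_cases hx : x ∈ t <;> simp [hx]
  rw [h_eq]
  refine condExp_mul_of_stronglyMeasurable_left hh ?_ ((integrable_const 1).indicator ht)
  exact h_eq ▸ hint.indicator ht

section

variable {Ω : Type*} {mΩ : MeasurableSpace Ω} [StandardBorelSpace Ω] {μ : Measure Ω}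
  [IsFiniteMeasure μ] {F₁ F₂ G : MeasurableSpace Ω}

theorem condExp_indicator_sup_ae_eq_of_condIndep (hF₁ : F₁ ≤ mΩ) (hF₂ : F₂ ≤ mΩ) (hG : G ≤ mΩ)
    (h : CondIndep G F₁ F₂ hG μ) {s : Set Ω} (hs : MeasurableSet[F₁] s) :
    μ⟦s | F₂ ⊔ G⟧ =ᵐ[μ] μ⟦s | G⟧ := by
  have hsm := hF₁ s hs
  have basic : ∀ u ∈ image2 (· ∩ ·) {t | MeasurableSet[F₂] t} {e | MeasurableSet[G] e},
      ∫ x in u, (μ⟦s | G⟧) x ∂μ = ∫ x in u, s.indicator (fun _ => (1 : ℝ)) x ∂μ := by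
    rintro _ ⟨t, ht, e, he, rfl⟩
    have htm := hF₂ t ht
    have h_prod : μ[t.indicator (μ⟦s | G⟧) | G] =ᵐ[μ] μ⟦s ∩ t | G⟧ :=
      (condExp_indicator_ae_eq_mul_condExp_indicator stronglyMeasurable_condExp
        integrable_condExp htm).trans ((condIndep_iff G F₁ F₂ hG hF₁ hF₂ μ).mp h s t hs ht).symm
    calc ∫ x in t ∩ e, (μ⟦s | G⟧) x ∂μ
      _ = ∫ x in e, t.indicator (μ⟦s | G⟧) x ∂μ := by rw [setIntegral_indicator htm, inter_comm]
      _ = ∫ x in e, μ[t.indicator (μ⟦s | G⟧) | G] x ∂μ :=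
        (setIntegral_condExp hG (integrable_condExp.indicator htm) he).symm
      _ = ∫ x in e, (μ⟦s ∩ t | G⟧) x ∂μ := integral_congr_ae (ae_restrict_of_ae h_prod)
      _ = ∫ x in e, (s ∩ t).indicator (fun _ => (1 : ℝ)) x ∂μ :=
        setIntegral_condExp hG ((integrable_const 1).indicator (hsm.inter htm)) he
      _ = ∫ x in t ∩ e, s.indicator (fun _ => (1 : ℝ)) x ∂μ := by
        rw [setIntegral_indicator (hsm.inter htm), setIntegral_indicator hsm]
        congr 2
        ac_rfl
  exact (ae_eq_condExp_of_setIntegral_eq_of_isPiSystem (sup_le hF₂ hG)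
    (MeasurableSpace.sup_eq_generateFrom_image2_inter F₂ G)
    ((@MeasurableSpace.isPiSystem_measurableSet Ω F₂).image2_inter
      (@MeasurableSpace.isPiSystem_measurableSet Ω G))
    ((integrable_const 1).indicator hsm) integrable_condExp
    (stronglyMeasurable_condExp.mono (le_sup_right : G ≤ F₂ ⊔ G)).aestronglyMeasurable basic
    (integral_condExp hG)).symm

theorem condIndep_of_condExp_indicator_sup_ae_eq (hF₁ : F₁ ≤ mΩ) (hF₂ : F₂ ≤ mΩ) (hG : G ≤ mΩ)
    (h : ∀ s, MeasurableSet[F₁] s → μ⟦s | F₂ ⊔ G⟧ =ᵐ[μ] μ⟦s | G⟧) :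
    CondIndep G F₁ F₂ hG μ := by
  refine (condIndep_iff G F₁ F₂ hG hF₁ hF₂ μ).mpr fun s t hs ht => ?_
  have htm := hF₂ t ht
  calc μ⟦s ∩ t | G⟧
    _ = μ[t.indicator (s.indicator fun _ => (1 : ℝ)) | G] := by rw [indicator_indicator, inter_comm]
    _ =ᵐ[μ] μ[μ[t.indicator (s.indicator fun _ => (1 : ℝ)) | F₂ ⊔ G] | G] :=
      (condExp_condExp_of_le le_sup_right (sup_le hF₂ hG)).symm
    _ =ᵐ[μ] μ[t.indicator (μ⟦s | F₂ ⊔ G⟧) | G] :=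
      condExp_congr_ae (condExp_indicator ((integrable_const 1).indicator (hF₁ s hs))
        (le_sup_left (a := F₂) t ht))
    _ =ᵐ[μ] μ[t.indicator (μ⟦s | G⟧) | G] := condExp_congr_ae ((h s hs).indicator)
    _ =ᵐ[μ] μ⟦s | G⟧ * μ⟦t | G⟧ := condExp_indicator_ae_eq_mul_condExp_indicator
      stronglyMeasurable_condExp integrable_condExp htm

end

/-- If `F₁` and `F₂` are conditionally independent given `G`, and `F` is a σ-algebra with
`G ⊆ F ⊆ σ(F₂ ∪ G)`, then `F₁` and `F₂` are conditionally independent given `F`. -/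
theorem condIndep_of_le_sup {Ω : Type*} [m : MeasurableSpace Ω] [StandardBorelSpace Ω]
    (μ : Measure Ω) [IsProbabilityMeasure μ]
    (F₁ F₂ G F : MeasurableSpace Ω)
    (hF₁ : F₁ ≤ m) (hF₂ : F₂ ≤ m) (hG : G ≤ m) (hF : F ≤ m)
    (hCI : CondIndep G F₁ F₂ hG μ)
    (hGF : G ≤ F) (hFle : F ≤ F₂ ⊔ G) :
    CondIndep F F₁ F₂ hF μ := by
  have hsup : F₂ ⊔ F = F₂ ⊔ G := le_antisymm (sup_le le_sup_left hFle) (sup_le_sup_left hGF F₂)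
  refine condIndep_of_condExp_indicator_sup_ae_eq hF₁ hF₂ hF fun s hs => ?_
  have h_sup_G : μ⟦s | F₂ ⊔ G⟧ =ᵐ[μ] μ⟦s | G⟧ :=
    condExp_indicator_sup_ae_eq_of_condIndep hF₁ hF₂ hG hCI hs
  have h_F_G : μ⟦s | F⟧ =ᵐ[μ] μ⟦s | G⟧ :=
    condExp_ae_eq_condExp_of_le_of_le hGF hFle (sup_le hF₂ hG) h_sup_G
  rw [hsup]
  exact h_sup_G.trans h_F_G.symm
end

section
/- Let f : ℝ → ℝ be continuous and suppose there exist C > 0 and a locally integrable g : ℝ⁺ → ℝ⁺ with |f(x)|² ≤ C + ∫₀^{|x|} g(y) dy for all x, and ∫₀^∞ g(y)e^{−y²/(2τ)} dy < ∞ for some τ > 0. Then there exists M > 0 such that E[|f(S_{⌊nt⌋}/√n)|²] < M for all t ≤ τ and all n, and moreover ∫ |f(x)|·e^{−x²/(2τ)} dx < ∞. -/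
open MeasureTheory ProbabilityTheory
open scoped ENNReal

/-!
Each step `ε i` is bounded and centred, so by Hoeffding's lemma it is sub-Gaussian with
parameter `1`, and by independence `S_m` is sub-Gaussian with parameter `m`. For `m ≤ nτ` this
gives the uniform tail bound `P(|S_m / √n| ≥ y) ≤ 2 e^{-y²/(2τ)}`. The layer-cake formula turns
`E[∫₀^{|X|} g]` into `∫₀^∞ P(|X| ≥ y) g(y) dy`, which the tail bound controls by
`2 ∫₀^∞ g(y) e^{-y²/(2τ)} dy`. For the integrability statement, `∫₀^{|x|} g ≤ K e^{x²/(2τ)}`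
gives `|f x| ≤ √C + √K e^{x²/(4τ)}`, and both resulting terms are Gaussian.
-/

open Real Set

section Rademacher

variable {Ω : Type*} [MeasurableSpace Ω] {μ : Measure Ω} [IsProbabilityMeasure μ] {X : Ω → ℝ}

lemma ae_eq_one_or_eq_neg_one_of_prob_eq_half (hX : Measurable X)
    (h1 : μ {ω | X ω = 1} = 1 / 2) (h2 : μ {ω | X ω = -1} = 1 / 2) :
    ∀ᵐ ω ∂μ, X ω = 1 ∨ X ω = -1 := by
  have hdisj : Disjoint {ω | X ω = 1} {ω | X ω = -1} :=
    disjoint_left.2 fun ω (hω1 : X ω = 1) (hω2 : X ω = -1) => by linarith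
  have hB : MeasurableSet {ω | X ω = -1} := hX (measurableSet_singleton (-1))
  refine (ae_iff_measure_eq (p := fun ω => ω ∈ {ω | X ω = 1} ∪ {ω | X ω = -1})
    ((hX (measurableSet_singleton 1)).union hB).nullMeasurableSet).2 ?_
  rw [ofPred_mem_eq, measure_union hdisj hB, h1, h2, ENNReal.add_halves, measure_univ]

lemma integral_eq_zero_of_prob_eq_half (hX : Measurable X)
    (h1 : μ {ω | X ω = 1} = 1 / 2) (h2 : μ {ω | X ω = -1} = 1 / 2) : μ[X] = 0 := by
  have hA : MeasurableSet {ω | X ω = 1} := hX (measurableSet_singleton 1)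
  have hB : MeasurableSet {ω | X ω = -1} := hX (measurableSet_singleton (-1))
  have hX_eq : X =ᵐ[μ] {ω | X ω = 1}.indicator 1 - {ω | X ω = -1}.indicator 1 := by
    filter_upwards [ae_eq_one_or_eq_neg_one_of_prob_eq_half hX h1 h2] with ω hω
    rcases hω with h | h <;> norm_num [indicator, h]
  rw [integral_congr_ae hX_eq, integral_sub' ((integrable_const 1).indicator hA)
      ((integrable_const 1).indicator hB), integral_indicator_one hA, integral_indicator_one hB,
    measureReal_def, measureReal_def, h1, h2, sub_self]

lemma hasSubgaussianMGF_one_of_prob_eq_half (hX : Measurable X)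
    (h1 : μ {ω | X ω = 1} = 1 / 2) (h2 : μ {ω | X ω = -1} = 1 / 2) :
    HasSubgaussianMGF X 1 μ := by
  have hIcc : ∀ᵐ ω ∂μ, X ω ∈ Icc (-1) 1 := by
    filter_upwards [ae_eq_one_or_eq_neg_one_of_prob_eq_half hX h1 h2] with ω hω
    rcases hω with h | h <;> simp [h]
  convert hasSubgaussianMGF_of_mem_Icc_of_integral_eq_zero hX.aemeasurable hIcc
    (integral_eq_zero_of_prob_eq_half hX h1 h2)
  ext
  norm_num

end Rademacher

lemma ProbabilityTheory.HasSubgaussianMGF.measureReal_abs_ge_le {Ω : Type*} [MeasurableSpace Ω]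
    {μ : Measure Ω} {X : Ω → ℝ} {c : NNReal} (h : HasSubgaussianMGF X c μ) {ε : ℝ} (hε : 0 ≤ ε) :
    μ.real {ω | ε ≤ |X ω|} ≤ 2 * exp (-ε ^ 2 / (2 * c)) := by
  have hunion : {ω | ε ≤ |X ω|} = {ω | ε ≤ X ω} ∪ {ω | ε ≤ (-X) ω} := by
    ext ω
    simp [le_abs]
  calc μ.real {ω | ε ≤ |X ω|} ≤ μ.real {ω | ε ≤ X ω} + μ.real {ω | ε ≤ (-X) ω} := by
        rw [hunion]; exact measureReal_union_le _ _
    _ ≤ exp (-ε ^ 2 / (2 * c)) + exp (-ε ^ 2 / (2 * c)) :=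
        add_le_add (h.measure_ge_le hε) (h.neg.measure_ge_le hε)
    _ = 2 * exp (-ε ^ 2 / (2 * c)) := by ring

lemma measureReal_abs_sum_div_sqrt_ge_le {Ω : Type*} [MeasurableSpace Ω] {μ : Measure Ω}
    [IsProbabilityMeasure μ] {ε : ℕ → Ω → ℝ} (hindep : iIndepFun ε μ)
    (hsub : ∀ i, HasSubgaussianMGF (ε i) 1 μ) {m n : ℕ} {τ : ℝ} (hmn : (m : ℝ) ≤ n * τ)
    {y : ℝ} (hy : 0 < y) :
    μ.real {ω | y ≤ |(∑ i ∈ Finset.range m, ε i ω) / √n|} ≤ 2 * exp (-y ^ 2 / (2 * τ)) := by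
  -- For `m = 0` the sub-Gaussian bound degenerates to `2 * exp (-y ^ 2 / 0) = 2`; the event is
  -- empty instead.
  rcases Nat.eq_zero_or_pos m with rfl | hm
  · simp [hy.not_ge, exp_nonneg]
  have hm' : (0 : ℝ) < m := Nat.cast_pos.2 hm
  have hnτ : 0 < (n : ℝ) * τ := hm'.trans_le hmn
  have hτ : 0 < τ := pos_of_mul_pos_right hnτ n.cast_nonneg
  have hn : 0 < √n := sqrt_pos.2 (pos_of_mul_pos_left hnτ hτ.le)
  have hS : HasSubgaussianMGF (fun ω => ∑ i ∈ Finset.range m, ε i ω) m μ := by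
    simpa using HasSubgaussianMGF.sum_of_iIndepFun (s := Finset.range m) hindep fun i _ => hsub i
  have hset : {ω | y ≤ |(∑ i ∈ Finset.range m, ε i ω) / √n|}
      = {ω | y * √n ≤ |∑ i ∈ Finset.range m, ε i ω|} := by
    ext ω
    simp only [mem_ofPred_eq, abs_div, abs_of_pos hn, le_div_iff₀ hn]
  have hexp : -(y * √n) ^ 2 / (2 * m) ≤ -y ^ 2 / (2 * τ) := by
    rw [mul_pow, sq_sqrt n.cast_nonneg, neg_div, neg_div, neg_le_neg_iff,
      div_le_div_iff₀ (by positivity) (by positivity)]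
    nlinarith [sq_nonneg y]
  rw [hset]
  calc _ ≤ 2 * exp (-(y * √n) ^ 2 / (2 * m)) := by
        exact_mod_cast hS.measureReal_abs_ge_le (by positivity)
    _ ≤ 2 * exp (-y ^ 2 / (2 * τ)) := by gcongr

lemma MeasureTheory.LocallyIntegrableOn.intervalIntegrable_of_Ici {g : ℝ → ℝ}
    (hg : LocallyIntegrableOn g (Ici 0)) {r : ℝ} (hr : 0 ≤ r) : IntervalIntegrable g volume 0 r :=
  (intervalIntegrable_iff_integrableOn_Icc_of_le hr).2 <|
    hg.integrableOn_compact_subset Icc_subset_Ici_self isCompact_Icc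

section MomentBound

variable {Ω : Type*} [MeasurableSpace Ω] {μ : Measure Ω} {X : Ω → ℝ} {g h : ℝ → ℝ}

lemma lintegral_ofReal_intervalIntegral_abs_le [IsFiniteMeasure μ] (hX : AEMeasurable X μ)
    (hg0 : ∀ y, 0 ≤ g y) (hgloc : LocallyIntegrableOn g (Ici 0))
    (htail : ∀ y > 0, μ.real {ω | y ≤ |X ω|} ≤ h y) :
    ∫⁻ ω, ENNReal.ofReal (∫ y in 0..|X ω|, g y) ∂μ
      ≤ ∫⁻ y in Ioi 0, ENNReal.ofReal (h y * g y) := by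
  rw [lintegral_comp_eq_lintegral_meas_le_mul μ (ae_of_all _ fun ω => abs_nonneg (X ω))
    hX.abs (fun r hr => hgloc.intervalIntegrable_of_Ici hr.le) (ae_of_all _ hg0)]
  refine lintegral_mono_ae <| (ae_restrict_iff' measurableSet_Ioi).2 <| ae_of_all _ fun y hy => ?_
  rw [← ofReal_measureReal, ← ENNReal.ofReal_mul measureReal_nonneg]
  exact ENNReal.ofReal_le_ofReal (mul_le_mul_of_nonneg_right (htail y hy) (hg0 y))

lemma integral_sq_abs_comp_le [IsProbabilityMeasure μ] (hX : AEMeasurable X μ) {f : ℝ → ℝ}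
    (hf : Measurable f) {C : ℝ} (hC : 0 ≤ C) (hg0 : ∀ y, 0 ≤ g y)
    (hgloc : LocallyIntegrableOn g (Ici 0)) (hfg : ∀ x, |f x| ^ 2 ≤ C + ∫ y in 0..|x|, g y)
    (htail : ∀ y > 0, μ.real {ω | y ≤ |X ω|} ≤ h y)
    (hhg : IntegrableOn (fun y => h y * g y) (Ioi 0)) :
    ∫ ω, |f (X ω)| ^ 2 ∂μ ≤ C + ∫ y in Ioi 0, h y * g y := by
  have hhg0 : ∀ y ∈ Ioi (0 : ℝ), 0 ≤ h y * g y := fun y hy =>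
    mul_nonneg (measureReal_nonneg.trans (htail y hy)) (hg0 y)
  have hlint : ∫⁻ ω, ENNReal.ofReal (|f (X ω)| ^ 2) ∂μ
      ≤ ENNReal.ofReal (C + ∫ y in Ioi 0, h y * g y) := calc
    _ ≤ ∫⁻ ω, ENNReal.ofReal C + ENNReal.ofReal (∫ y in 0..|X ω|, g y) ∂μ :=
        lintegral_mono fun ω => (ENNReal.ofReal_le_ofReal (hfg _)).trans ENNReal.ofReal_add_le
    _ = ENNReal.ofReal C + ∫⁻ ω, ENNReal.ofReal (∫ y in 0..|X ω|, g y) ∂μ := by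
        rw [lintegral_add_left measurable_const, lintegral_const, measure_univ, mul_one]
    _ ≤ ENNReal.ofReal C + ∫⁻ y in Ioi 0, ENNReal.ofReal (h y * g y) := by
        gcongr
        exact lintegral_ofReal_intervalIntegral_abs_le hX hg0 hgloc htail
    _ = ENNReal.ofReal (C + ∫ y in Ioi 0, h y * g y) := by
        rw [← ofReal_integral_eq_lintegral_ofReal hhg ((ae_restrict_iff' measurableSet_Ioi).2
          (ae_of_all _ hhg0)), ENNReal.ofReal_add hC (setIntegral_nonneg measurableSet_Ioi hhg0)]
  have hmeas : AEStronglyMeasurable (fun ω => |f (X ω)| ^ 2) μ :=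
    ((hf.comp_aemeasurable hX).abs.pow_const 2).aestronglyMeasurable
  rw [integral_eq_lintegral_of_nonneg_ae (ae_of_all _ fun ω => by positivity) hmeas]
  exact ENNReal.toReal_le_of_le_ofReal (add_nonneg hC (setIntegral_nonneg measurableSet_Ioi hhg0))
    hlint

end MomentBound

lemma integrable_exp_neg_sq_div {σ : ℝ} (hσ : 0 < σ) :
    Integrable fun x : ℝ => exp (-x ^ 2 / σ) := by
  simpa [neg_div, div_eq_inv_mul] using integrable_exp_neg_mul_sq (inv_pos.2 hσ)

lemma intervalIntegral_le_exp_mul_setIntegral_Ioi {g : ℝ → ℝ} {τ r : ℝ} (hτ : 0 ≤ τ)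
    (hr : 0 ≤ r) (hg0 : ∀ y, 0 ≤ g y) (hgr : IntervalIntegrable g volume 0 r)
    (hgint : IntegrableOn (fun y => g y * exp (-y ^ 2 / (2 * τ))) (Ioi 0)) :
    ∫ y in 0..r, g y ≤ exp (r ^ 2 / (2 * τ)) * ∫ y in Ioi 0, g y * exp (-y ^ 2 / (2 * τ)) := by
  have hweight : ∀ y ∈ Icc 0 r, g y ≤ exp (r ^ 2 / (2 * τ)) * (g y * exp (-y ^ 2 / (2 * τ))) := by
    intro y ⟨hy0, hyr⟩
    have hexp : 1 ≤ exp (r ^ 2 / (2 * τ)) * exp (-y ^ 2 / (2 * τ)) := by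
      rw [← exp_add, ← add_div, ← sub_eq_add_neg]
      exact one_le_exp (div_nonneg (by nlinarith) (by positivity))
    nlinarith [hg0 y]
  calc ∫ y in 0..r, g y
      ≤ ∫ y in 0..r, exp (r ^ 2 / (2 * τ)) * (g y * exp (-y ^ 2 / (2 * τ))) :=
        intervalIntegral.integral_mono_on hr hgr
          (((intervalIntegrable_iff_integrableOn_Ioc_of_le hr).2
            (hgint.mono_set Ioc_subset_Ioi_self)).const_mul _) hweight
    _ = exp (r ^ 2 / (2 * τ)) * ∫ y in Ioc 0 r, g y * exp (-y ^ 2 / (2 * τ)) := by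
        rw [intervalIntegral.integral_const_mul, intervalIntegral.integral_of_le hr]
    _ ≤ exp (r ^ 2 / (2 * τ)) * ∫ y in Ioi 0, g y * exp (-y ^ 2 / (2 * τ)) := by
        refine mul_le_mul_of_nonneg_left ?_ (exp_nonneg _)
        exact setIntegral_mono_set hgint (ae_of_all _ fun y => mul_nonneg (hg0 y) (exp_nonneg _))
          (ae_of_all _ Ioc_subset_Ioi_self)

lemma integrable_abs_mul_exp_neg_sq_div {f : ℝ → ℝ} (hf : AEStronglyMeasurable f)
    {C K τ : ℝ} (hC : 0 ≤ C) (hK : 0 ≤ K) (hτ : 0 < τ)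
    (hfK : ∀ x, |f x| ^ 2 ≤ C + K * exp (x ^ 2 / (2 * τ))) :
    Integrable fun x => |f x| * exp (-x ^ 2 / (2 * τ)) := by
  have hbound : ∀ x, |f x| * exp (-x ^ 2 / (2 * τ))
      ≤ √C * exp (-x ^ 2 / (2 * τ)) + √K * exp (-x ^ 2 / (4 * τ)) := by
    intro x
    have hhalf : exp (x ^ 2 / (2 * τ)) = exp (x ^ 2 / (4 * τ)) ^ 2 := by
      rw [← exp_nat_mul]; congr 1; field_simp; ring
    have habs : |f x| ≤ √C + √K * exp (x ^ 2 / (4 * τ)) := by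
      refine (pow_le_pow_iff_left₀ (abs_nonneg _) (by positivity) two_ne_zero).1 ?_
      have := hfK x
      rw [hhalf] at this
      nlinarith [sq_sqrt hC, sq_sqrt hK, mul_nonneg (mul_nonneg (sqrt_nonneg C) (sqrt_nonneg K))
        (exp_nonneg (x ^ 2 / (4 * τ)))]
    have hexp : exp (x ^ 2 / (4 * τ)) * exp (-x ^ 2 / (2 * τ)) = exp (-x ^ 2 / (4 * τ)) := by
      rw [← exp_add]; congr 1; field_simp; ring
    calc |f x| * exp (-x ^ 2 / (2 * τ))
        ≤ (√C + √K * exp (x ^ 2 / (4 * τ))) * exp (-x ^ 2 / (2 * τ)) := by gcongr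
      _ = _ := by rw [add_mul, mul_assoc, hexp]
  refine (((integrable_exp_neg_sq_div (σ := 2 * τ) (by positivity)).const_mul √C).add
    ((integrable_exp_neg_sq_div (σ := 4 * τ) (by positivity)).const_mul √K)).mono'
    (hf.norm.mul (continuous_exp.comp (by fun_prop)).aestronglyMeasurable) (ae_of_all _ fun x => ?_)
  rw [norm_of_nonneg (by positivity)]
  exact hbound x

/-- Let `f : ℝ → ℝ` be continuous and suppose there are `C > 0` and a nonnegative locally
integrable `g` on `ℝ⁺` with `|f x|² ≤ C + ∫₀^{|x|} g` for all `x`, and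
`∫₀^∞ g y e^{-y²/(2τ)} dy < ∞` for some `τ > 0`. Then, for the simple symmetric random
walk `S`, there is `M > 0` with `E[|f (S_{⌊nt⌋}/√n)|²] < M` for all `t ≤ τ` and all `n`,
and moreover `∫ |f x| e^{-x²/(2τ)} dx < ∞`. -/
theorem random_walk_second_moment_bound {Ω : Type*} [MeasureSpace Ω]
    [IsProbabilityMeasure (ℙ : Measure Ω)]
    (ε : ℕ → Ω → ℝ) (hmeas : ∀ i, Measurable (ε i))
    (hindep : iIndepFun ε ℙ)
    (h1 : ∀ i, ℙ {ω | ε i ω = 1} = 1 / 2)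
    (h2 : ∀ i, ℙ {ω | ε i ω = -1} = 1 / 2)
    (f : ℝ → ℝ) (hf : Continuous f)
    (C : ℝ) (hC : 0 < C)
    (g : ℝ → ℝ) (hg0 : ∀ y, 0 ≤ g y) (hgloc : LocallyIntegrableOn g (Set.Ici 0))
    (hfg : ∀ x : ℝ, |f x| ^ 2 ≤ C + ∫ y in (0 : ℝ)..|x|, g y)
    (τ : ℝ) (hτ : 0 < τ)
    (hgint : IntegrableOn (fun y => g y * Real.exp (-y ^ 2 / (2 * τ))) (Set.Ioi 0)) :
    (∃ M > (0 : ℝ), ∀ t : ℝ, t ≤ τ → ∀ n : ℕ,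
      ∫ ω, |f ((∑ i ∈ Finset.range ⌊(n : ℝ) * t⌋₊, ε i ω) / Real.sqrt n)| ^ 2 ∂ℙ < M) ∧
    Integrable (fun x => |f x| * Real.exp (-x ^ 2 / (2 * τ))) := by
  set K := ∫ y in Ioi 0, g y * exp (-y ^ 2 / (2 * τ))
  have hK : 0 ≤ K :=
    setIntegral_nonneg measurableSet_Ioi fun y _ => mul_nonneg (hg0 y) (exp_nonneg _)
  refine ⟨⟨C + 2 * K + 1, by linarith, fun t ht n => ?_⟩, ?_⟩
  · have hsub : ∀ i, HasSubgaussianMGF (ε i) 1 ℙ := fun i =>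
      hasSubgaussianMGF_one_of_prob_eq_half (hmeas i) (h1 i) (h2 i)
    have hhg : IntegrableOn (fun y => 2 * exp (-y ^ 2 / (2 * τ)) * g y) (Ioi 0) :=
      IntegrableOn.congr_fun (hgint.const_mul 2) (fun y _ => by ring) measurableSet_Ioi
    have hm : (⌊(n : ℝ) * t⌋₊ : ℝ) ≤ n * τ :=
      (Nat.cast_le.2 (Nat.floor_le_floor (by gcongr))).trans (Nat.floor_le (by positivity))
    have hS : Measurable fun ω => (∑ i ∈ Finset.range ⌊(n : ℝ) * t⌋₊, ε i ω) / √n :=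
      (Finset.measurable_sum _ fun i _ => hmeas i).div_const _
    refine (integral_sq_abs_comp_le hS.aemeasurable hf.measurable hC.le hg0 hgloc hfg
      (fun y hy => measureReal_abs_sum_div_sqrt_ge_le hindep hsub hm hy) hhg).trans_lt ?_
    have hhg_eq : ∫ y in Ioi 0, 2 * exp (-y ^ 2 / (2 * τ)) * g y = 2 * K := by
      rw [← integral_const_mul]
      congr with y
      ring
    linarith
  · refine integrable_abs_mul_exp_neg_sq_div hf.aestronglyMeasurable hC.le hK hτ fun x => ?_
    calc |f x| ^ 2 ≤ C + ∫ y in 0..|x|, g y := hfg x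
      _ ≤ C + K * exp (x ^ 2 / (2 * τ)) := by
        rw [mul_comm, ← sq_abs x]
        gcongr
        exact intervalIntegral_le_exp_mul_setIntegral_Ioi hτ.le (abs_nonneg x) hg0
          (hgloc.intervalIntegrable_of_Ici (abs_nonneg x)) hgint
end
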